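/- arXiv:2205.07628 — 3 statements merged into one kernel-verified Lean document; each statement's English description precedes it below -/
import Mathlib

section
/- (Clausius' version of the second law.) Let n, k₁, k₂, d be natural numbers with k₂ ≤ k₁, 1 ≤ d ≤ k₂, and k₁ + d ≤ n. Then there is no injective map from the set of pairs (x, y) of length-n binary strings with Hamming weights H_W(x) = k₁ and H_W(y) = k₂ into the set of pairs (x', y') of length-n binary strings with Hamming weights H_W(x') = k₁ + d and H_W(y') = k₂ - d. In particular, no logically reversible, total-Hamming-weight-preserving transformation can make the hotter string hotter and the colder string colder. -/
/-- Hamming weight of a length-`n` binary string. -/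
def hammingWeight {n : ℕ} (x : Fin n → Bool) : ℕ :=
  (Finset.univ.filter fun i => x i = true).card

/-- Binary strings correspond to finsets. -/
def boolFunEquivFinset (n : ℕ) : (Fin n → Bool) ≃ Finset (Fin n) where
  toFun x := Finset.univ.filter fun i => x i = true
  invFun s := fun i => decide (i ∈ s)
  left_inv x := by funext i; simp
  right_inv s := by ext i; simp

lemma card_weight (n k : ℕ) :
    Fintype.card {x : Fin n → Bool // hammingWeight x = k} = n.choose k := by
  have e : {x : Fin n → Bool // hammingWeight x = k} ≃
      {s : Finset (Fin n) // s.card = k} :=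
    (boolFunEquivFinset n).subtypeEquiv (fun x => by
      simp [boolFunEquivFinset, hammingWeight])
  rw [Fintype.card_congr e, Fintype.card_finset_len, Fintype.card_fin]

lemma choose_step (n k m : ℕ) (hm : 1 ≤ m) (hmk : m ≤ k) (hkn : k + 1 ≤ n) :
    n.choose (k + 1) * n.choose (m - 1) < n.choose k * n.choose m := by
  have hA : 0 < n.choose k := Nat.choose_pos (by omega)
  have hB : 0 < n.choose m := Nat.choose_pos (by omega)
  have h1 : n.choose (k + 1) * (k + 1) = n.choose k * (n - k) :=
    Nat.choose_succ_right_eq n k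
  have h2 : n.choose m * m = n.choose (m - 1) * (n - (m - 1)) := by
    have := Nat.choose_succ_right_eq n (m - 1)
    rwa [Nat.sub_add_cancel hm] at this
  have hpos : 0 < (k + 1) * (n - (m - 1)) := by
    have : 0 < n - (m - 1) := by omega
    positivity
  have key : (n - k) * m < (k + 1) * (n - (m - 1)) := by
    have h3 : n - k ≤ n - (m - 1) := by omega
    calc (n - k) * m ≤ (n - (m - 1)) * m := Nat.mul_le_mul_right _ h3
      _ < (n - (m - 1)) * (k + 1) := by
          exact Nat.mul_lt_mul_of_le_of_lt (le_refl _) (by omega) (by omega)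
      _ = (k + 1) * (n - (m - 1)) := Nat.mul_comm _ _
  have main : n.choose (k + 1) * n.choose (m - 1) * ((k + 1) * (n - (m - 1)))
      < n.choose k * n.choose m * ((k + 1) * (n - (m - 1))) := by
    have lhs_eq : n.choose (k + 1) * n.choose (m - 1) * ((k + 1) * (n - (m - 1)))
        = (n.choose (k + 1) * (k + 1)) * (n.choose (m - 1) * (n - (m - 1))) := by ring
    have rhs1 : (n.choose (k + 1) * (k + 1)) * (n.choose (m - 1) * (n - (m - 1)))
        = (n.choose k * (n - k)) * (n.choose m * m) := by rw [h1, ← h2]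
    rw [lhs_eq, rhs1]
    have : (n.choose k * (n - k)) * (n.choose m * m)
        = (n.choose k * n.choose m) * ((n - k) * m) := by ring
    rw [this]
    exact Nat.mul_lt_mul_of_le_of_lt (le_refl _) key (by positivity)
  exact Nat.lt_of_mul_lt_mul_right main

lemma chain_le (n a b : ℕ) (hab : b ≤ a) : ∀ d, d ≤ b → a + d ≤ n →
    n.choose (a + d) * n.choose (b - d) ≤ n.choose a * n.choose b := by
  intro d
  induction d with
  | zero => simp
  | succ d ih =>
    intro hdb hdn
    have step : n.choose (a + d + 1) * n.choose (b - d - 1)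
        < n.choose (a + d) * n.choose (b - d) := by
      apply choose_step n (a + d) (b - d) (by omega) (by omega) (by omega)
    calc n.choose (a + (d + 1)) * n.choose (b - (d + 1))
        = n.choose (a + d + 1) * n.choose (b - d - 1) := by
          rw [show a + (d+1) = a + d + 1 by omega, show b - (d+1) = b - d - 1 by omega]
      _ ≤ n.choose (a + d) * n.choose (b - d) := le_of_lt step
      _ ≤ n.choose a * n.choose b := ih (by omega) (by omega)

lemma choose_chain (n k₁ k₂ d : ℕ) (hk : k₂ ≤ k₁) (hd1 : 1 ≤ d) (hd2 : d ≤ k₂)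
    (hkn : k₁ + d ≤ n) :
    n.choose (k₁ + d) * n.choose (k₂ - d) < n.choose k₁ * n.choose k₂ := by
  have h1 : n.choose (k₁ + d) * n.choose (k₂ - d)
      ≤ n.choose (k₁ + 1) * n.choose (k₂ - 1) := by
    have := chain_le n (k₁ + 1) (k₂ - 1) (by omega) (d - 1) (by omega) (by omega)
    have e1 : k₁ + 1 + (d - 1) = k₁ + d := by omega
    have e2 : k₂ - 1 - (d - 1) = k₂ - d := by omega
    rwa [e1, e2] at this
  have h2 : n.choose (k₁ + 1) * n.choose (k₂ - 1) < n.choose k₁ * n.choose k₂ :=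
    choose_step n k₁ k₂ (by omega) hk (by omega)
  exact lt_of_le_of_lt h1 h2

theorem clausius_second_law (n k₁ k₂ d : ℕ) (hk : k₂ ≤ k₁) (hd1 : 1 ≤ d) (hd2 : d ≤ k₂)
    (hkn : k₁ + d ≤ n) :
    ¬ ∃ f : {p : (Fin n → Bool) × (Fin n → Bool) //
        hammingWeight p.1 = k₁ ∧ hammingWeight p.2 = k₂} →
      {p : (Fin n → Bool) × (Fin n → Bool) //
        hammingWeight p.1 = k₁ + d ∧ hammingWeight p.2 = k₂ - d},
      Function.Injective f := by
  rintro ⟨f, hf⟩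
  have hcard := Fintype.card_le_of_injective f hf
  have cpair : ∀ a b : ℕ,
      Fintype.card {p : (Fin n → Bool) × (Fin n → Bool) //
        hammingWeight p.1 = a ∧ hammingWeight p.2 = b} = n.choose a * n.choose b := by
    intro a b
    rw [Fintype.card_congr (Equiv.subtypeProdEquivProd
      (p := fun x => hammingWeight x = a) (q := fun y => hammingWeight y = b)),
      Fintype.card_prod, card_weight, card_weight]
  rw [cpair, cpair] at hcard
  have := choose_chain n k₁ k₂ d hk hd1 hd2 hkn
  omega
end

section
/- (Equilibrium maximizes the number of microstates.) Let n and s be natural numbers with s ≤ 2n. Then for all natural numbers a, b with a + b = s, a ≤ n, and b ≤ n, one has C(n, a)·C(n, b) ≤ C(n, ⌈s/2⌉)·C(n, ⌊s/2⌋). That is, among all ways of distributing a fixed total Hamming weight s between two length-n strings, the number of microstate pairs is maximized when the two Hamming weights are as equal as possible. -/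
lemma choose_step_s9 (n a b : ℕ) (hab : a + 1 ≤ b) (hbn : b ≤ n) :
    n.choose a * n.choose b ≤ n.choose (a + 1) * n.choose (b - 1) := by
  have hb1 : b - 1 + 1 = b := by omega
  have h1 : n.choose (a + 1) * (a + 1) = n.choose a * (n - a) :=
    Nat.choose_succ_right_eq n a
  have h2 : n.choose b * b = n.choose (b - 1) * (n - (b - 1)) := by
    conv_lhs => rw [← hb1]
    exact Nat.choose_succ_right_eq n (b - 1)
  have key : (n - (b - 1)) * (a + 1) ≤ (n - a) * b :=
    Nat.mul_le_mul (Nat.sub_le_sub_left (by omega) n) hab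
  have hpos : 0 < (a + 1) * b := Nat.mul_pos (Nat.succ_pos a) (by omega)
  refine Nat.le_of_mul_le_mul_right ?_ hpos
  calc n.choose a * n.choose b * ((a + 1) * b)
      = n.choose a * (n.choose b * b) * (a + 1) := by ring
    _ = n.choose a * (n.choose (b - 1) * (n - (b - 1))) * (a + 1) := by rw [h2]
    _ = n.choose a * n.choose (b - 1) * ((n - (b - 1)) * (a + 1)) := by ring
    _ ≤ n.choose a * n.choose (b - 1) * ((n - a) * b) :=
        Nat.mul_le_mul_left _ key
    _ = (n.choose a * (n - a)) * (n.choose (b - 1) * b) := by ring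
    _ = (n.choose (a + 1) * (a + 1)) * (n.choose (b - 1) * b) := by rw [h1]
    _ = n.choose (a + 1) * n.choose (b - 1) * ((a + 1) * b) := by ring

lemma choose_aux (n s : ℕ) : ∀ d a b : ℕ, a + b = s → a ≤ b → b ≤ n → b - a ≤ d →
    n.choose a * n.choose b ≤ n.choose ((s + 1) / 2) * n.choose (s / 2) := by
  intro d
  induction d with
  | zero =>
    intro a b hab hle hbn hd
    have ha : a = s / 2 := by omega
    have hb : b = (s + 1) / 2 := by omega
    rw [ha, hb, Nat.mul_comm]
  | succ d ih =>
    intro a b hab hle hbn hd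
    by_cases h : b ≤ a + 1
    · have ha : a = s / 2 := by omega
      have hb : b = (s + 1) / 2 := by omega
      rw [ha, hb, Nat.mul_comm]
    · calc n.choose a * n.choose b
          ≤ n.choose (a + 1) * n.choose (b - 1) := choose_step_s9 n a b (by omega) hbn
        _ ≤ n.choose ((s + 1) / 2) * n.choose (s / 2) :=
            ih (a + 1) (b - 1) (by omega) (by omega) (by omega) (by omega)

theorem equilibrium_maximizes_microstates (n s : ℕ) (hs : s ≤ 2 * n) :
    ∀ a b : ℕ, a + b = s → a ≤ n → b ≤ n →
      n.choose a * n.choose b ≤ n.choose ((s + 1) / 2) * n.choose (s / 2) := by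
  intro a b hab han hbn
  rcases le_total a b with h | h
  · exact choose_aux n s (b - a) a b hab h hbn le_rfl
  · rw [Nat.mul_comm]
    exact choose_aux n s (a - b) b a (by omega) h han le_rfl
end

section
/- (Carnot ratio, differential form.) Let h(p) = -p·log₂(p) - (1-p)·log₂(1-p) be the base-2 binary entropy, and let t₁, t₂ be reals with 0 < t₂ < 1/2 and 0 < t₁ < 1. Let Δ : ℝ → ℝ satisfy Δ(0) = 0, Δ continuous at 0, and h(t₁ - ε) + h(t₂ + Δ(ε)) = h(t₁) + h(t₂) for all ε in some neighborhood of 0. Then Δ is differentiable at 0 with derivative Δ'(0) = h'(t₁)/h'(t₂) = log₂((1-t₁)/t₁) / log₂((1-t₂)/t₂). That is, the fraction Δ₂ of energy units that must be deposited in the cold bath per unit Δ₁ withdrawn from the hot bath, to first order, equals the ratio of the inverse statistical temperatures 1/T_stat(t₁) and 1/T_stat(t₂). -/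
open Filter

/-- The base-2 binary entropy function. -/
noncomputable def binEnt (p : ℝ) : ℝ :=
  -(p * Real.logb 2 p) - (1 - p) * Real.logb 2 (1 - p)

/-!
Near `ε = 0` the reversibility constraint reads `h ∘ (t₂ + Δ) = H`, where
`H ε = h t₁ + h t₂ - h (t₁ - ε)` has derivative `h'(t₁)` at `0`. Since `t₂ + Δ` is continuous
at `0` and `h'(t₂) = log₂((1 - t₂)/t₂) ≠ 0` for `t₂ ≠ 1/2`, the easy half of the inverse function
theorem (`HasDerivAt.of_comp_left`) gives `Δ'(0) = h'(t₁) / h'(t₂)`.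
-/

lemma binEnt_eq_binEntropy_div_log_two : binEnt = fun p ↦ Real.binEntropy p / Real.log 2 := by
  funext p
  simp only [binEnt, Real.binEntropy, Real.logb, Real.log_inv]
  ring

lemma hasDerivAt_binEnt {p : ℝ} (hp₀ : p ≠ 0) (hp₁ : p ≠ 1) :
    HasDerivAt binEnt (Real.logb 2 ((1 - p) / p)) p := by
  have hderiv : Real.logb 2 ((1 - p) / p) = (Real.log (1 - p) - Real.log p) / Real.log 2 := by
    rw [Real.logb, Real.log_div (sub_ne_zero.2 hp₁.symm) hp₀]
  rw [binEnt_eq_binEntropy_div_log_two, hderiv]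
  exact (Real.hasDerivAt_binEntropy hp₀ hp₁).div_const _

lemma logb_one_sub_div_self_pos {p : ℝ} (hp₀ : 0 < p) (hp : p < 1 / 2) :
    0 < Real.logb 2 ((1 - p) / p) :=
  Real.logb_pos one_lt_two <| (one_lt_div hp₀).2 (by linarith)

theorem carnot_ratio_differential (t₁ t₂ : ℝ) (ht₂0 : 0 < t₂) (ht₂ : t₂ < 1 / 2)
    (ht₁0 : 0 < t₁) (ht₁1 : t₁ < 1) (Δ : ℝ → ℝ) (hΔ0 : Δ 0 = 0)
    (hΔc : ContinuousAt Δ 0)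
    (hrev : ∀ᶠ ε in nhds 0, binEnt (t₁ - ε) + binEnt (t₂ + Δ ε) = binEnt t₁ + binEnt t₂) :
    HasDerivAt Δ (Real.logb 2 ((1 - t₁) / t₁) / Real.logb 2 ((1 - t₂) / t₂)) 0 := by
  have hcold : HasDerivAt binEnt (Real.logb 2 ((1 - t₂) / t₂)) (t₂ + Δ 0) := by
    rw [hΔ0, add_zero]
    exact hasDerivAt_binEnt ht₂0.ne' (by linarith)
  have hhot : HasDerivAt (fun ε ↦ binEnt t₁ + binEnt t₂ - binEnt (t₁ - ε))
      (Real.logb 2 ((1 - t₁) / t₁)) 0 := by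
    have h := HasDerivAt.comp_const_sub t₁ 0 <| by
      rw [sub_zero]; exact hasDerivAt_binEnt ht₁0.ne' ht₁1.ne
    simpa only [neg_neg] using h.const_sub (binEnt t₁ + binEnt t₂)
  have hcomp : binEnt ∘ (fun ε ↦ t₂ + Δ ε) =ᶠ[nhds 0]
      fun ε ↦ binEnt t₁ + binEnt t₂ - binEnt (t₁ - ε) :=
    hrev.mono fun ε hε ↦ by simp only [Function.comp_apply]; linarith
  exact (hasDerivAt_const_add_iff t₂).1 <|
    HasDerivAt.of_comp_left (continuousAt_const.add hΔc) hcold hhot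
      (logb_one_sub_div_self_pos ht₂0 ht₂).ne' hcomp
end
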